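/- For every real t, |((1+η)^(1/2+it) − 1)/(1/2+it)| ≤ C · min(η, 1/(1+|t|)) for some absolute constant C, where 0 < η ≤ 1 and (1+η)^(1/2+it) = exp((1/2+it)·log(1+η)). -/

import Mathlib

/-!
Write `(1+η)^s = exp (s log (1+η))` with `s = 1/2 + it`, where `0 ≤ log (1+η) ≤ η`. By the mean value
inequality for `u ↦ exp (u z)` on `[0, 1]`, `‖(1+η)^s - 1‖ ≤ η ‖s‖ (1+η)^{1/2}`, which after division
by `‖s‖` gives the bound `O(η)`. Trivially `‖(1+η)^s - 1‖ ≤ (1+η)^{1/2} + 1 ≤ 3`, and `‖s‖ ≥ (1+|t|)/4`,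
which gives the bound `O(1/(1+|t|))`.
-/

theorem Complex.norm_exp_sub_one_le_norm_mul_exp_re {z : ℂ} (hz : 0 ≤ z.re) :
    ‖exp z - 1‖ ≤ ‖z‖ * Real.exp z.re := by
  have hderiv : ∀ u ∈ Set.Icc (0 : ℝ) 1,
      HasDerivWithinAt (fun u : ℝ => exp (u * z)) (exp (u * z) * z) (Set.Icc 0 1) u := by
    intro u _
    have hlin : HasDerivAt (fun u : ℝ => (u : ℂ) * z) z u := by
      simpa using (ofRealCLM.hasDerivAt (x := u)).mul_const z
    exact ((hasDerivAt_exp _).comp u hlin).hasDerivWithinAt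
  have hbound : ∀ u ∈ Set.Icc (0 : ℝ) 1, ‖exp (u * z) * z‖ ≤ ‖z‖ * Real.exp z.re := by
    intro u hu
    rw [norm_mul, norm_exp, mul_comm]
    refine mul_le_mul_of_nonneg_left (Real.exp_le_exp.2 ?_) (norm_nonneg z)
    simpa using mul_le_of_le_one_left hz hu.2
  simpa using (convex_Icc (0 : ℝ) 1).norm_image_sub_le_of_norm_hasDerivWithin_le hderiv hbound
    (Set.left_mem_Icc.2 zero_le_one) (Set.right_mem_Icc.2 zero_le_one)

theorem Complex.norm_ofReal_cpow_sub_one_le {a : ℝ} (ha : 1 ≤ a) {s : ℂ} (hs : 0 ≤ s.re) :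
    ‖(a : ℂ) ^ s - 1‖ ≤ Real.log a * ‖s‖ * a ^ s.re := by
  have ha₀ : 0 < a := zero_lt_one.trans_le ha
  have hlog : 0 ≤ Real.log a := Real.log_nonneg ha
  have hcpow : (a : ℂ) ^ s = exp (Real.log a * s) := by
    rw [cpow_def_of_ne_zero (ofReal_ne_zero.2 ha₀.ne'), ← ofReal_log ha₀.le, mul_comm]
  have hre : ((Real.log a : ℂ) * s).re = Real.log a * s.re := by simp
  have := norm_exp_sub_one_le_norm_mul_exp_re (z := Real.log a * s) (by rw [hre]; positivity)
  rwa [hre, ← Real.rpow_def_of_pos ha₀, norm_mul, norm_real, Real.norm_of_nonneg hlog,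
    ← hcpow] at this

theorem one_add_abs_le_four_mul_norm_half_add_mul_I (t : ℝ) :
    1 + |t| ≤ 4 * ‖(1 / 2 : ℂ) + t * Complex.I‖ := by
  have hre := Complex.abs_re_le_norm ((1 / 2 : ℂ) + t * Complex.I)
  have him := Complex.abs_im_le_norm ((1 / 2 : ℂ) + t * Complex.I)
  norm_num at hre him
  rcases le_total |t| 1 with h | h <;> linarith

open Complex in
theorem stmt_5 :
    ∃ C : ℝ, 0 < C ∧ ∀ η t : ℝ, 0 < η → η ≤ 1 →
      ‖(((1 + η : ℝ) : ℂ) ^ ((1/2 : ℂ) + t * Complex.I) - 1) /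
          ((1/2 : ℂ) + t * Complex.I)‖ ≤ C * min η (1 / (1 + |t|)) := by
  refine ⟨12, by norm_num, fun η t hη hη₁ => ?_⟩
  set s : ℂ := (1 / 2 : ℂ) + t * I
  have hs_re : s.re = 1 / 2 := by simp [s]
  have hroot : (1 + η) ^ s.re ≤ 2 := by
    rw [hs_re]
    linarith [Real.rpow_le_self_of_one_le (by linarith : 1 ≤ 1 + η) (by norm_num : (1 / 2 : ℝ) ≤ 1)]
  have hsmall : ‖((1 + η : ℝ) : ℂ) ^ s - 1‖ ≤ 2 * η * ‖s‖ := by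
    have hlog : Real.log (1 + η) ≤ η := by
      linarith [Real.log_le_sub_one_of_pos (by linarith : 0 < 1 + η)]
    calc ‖((1 + η : ℝ) : ℂ) ^ s - 1‖ ≤ Real.log (1 + η) * ‖s‖ * (1 + η) ^ s.re :=
          norm_ofReal_cpow_sub_one_le (by linarith) (by rw [hs_re]; norm_num)
      _ ≤ η * ‖s‖ * 2 := by gcongr
      _ = 2 * η * ‖s‖ := by ring
  have hbdd : ‖((1 + η : ℝ) : ℂ) ^ s - 1‖ ≤ 3 := by
    have := norm_sub_le (((1 + η : ℝ) : ℂ) ^ s) 1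
    rw [norm_cpow_eq_rpow_re_of_pos (by linarith), norm_one] at this
    linarith
  have hs_large : 1 + |t| ≤ 4 * ‖s‖ := one_add_abs_le_four_mul_norm_half_add_mul_I t
  have hs_pos : 0 < ‖s‖ := by linarith [abs_nonneg t]
  rw [norm_div, mul_min_of_nonneg _ _ (by norm_num : (0 : ℝ) ≤ 12)]
  refine le_min ?_ ?_
  · rw [div_le_iff₀ hs_pos]
    nlinarith [mul_pos hη hs_pos]
  · rw [div_le_iff₀ hs_pos, mul_one_div, div_mul_eq_mul_div, le_div_iff₀ (by positivity)]
    linarith [mul_le_mul hbdd hs_large (by positivity) (by norm_num)]
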